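/- Let G be a connected plane graph with minimum degree at least 3 that contains no cycle of length 4, no cycle of length 7, no cycle of length 9, and no 5-cycle normally adjacent to a 3-cycle. Then no 3-face of G is adjacent to a 9-face of G. -/

import Mathlib

namespace Paper

open SimpleGraph

variable {V : Type*}

/-- The fixed-point-free involution on darts reversing each dart. -/
def dartFlip (G : SimpleGraph V) : Equiv.Perm G.Dart :=
  ⟨SimpleGraph.Dart.symm, SimpleGraph.Dart.symm,
    fun d => SimpleGraph.Dart.symm_symm d, fun d => SimpleGraph.Dart.symm_symm d⟩

/-- A combinatorial embedding (rotation system) of a simple graph: a permutation of the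
darts whose cycles are exactly the sets of darts emanating from a common vertex. -/
structure PlaneEmbedding (G : SimpleGraph V) where
  rot : Equiv.Perm G.Dart
  fst_rot : ∀ d : G.Dart, (rot d).fst = d.fst
  rot_cyclic : ∀ d e : G.Dart, d.fst = e.fst → rot.SameCycle d e

/-- The face permutation of a combinatorial embedding; its orbits are the (boundary walks
of the) faces of the embedding. -/
def PlaneEmbedding.facePerm {G : SimpleGraph V} (E : PlaneEmbedding G) : Equiv.Perm G.Dart :=
  E.rot * dartFlip G

/-- The face (as its set of boundary darts, i.e. the orbit of the face permutation)
containing a given dart. -/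
def faceOf {G : SimpleGraph V} (E : PlaneEmbedding G) (d : G.Dart) : Set G.Dart :=
  {e | E.facePerm.SameCycle d e}

/-- The length of the boundary walk of the face containing a given dart; a `k`-face is a
face whose boundary walk has length `k`, i.e. whose dart-orbit has size `k`. -/
noncomputable def faceSize {G : SimpleGraph V} (E : PlaneEmbedding G) (d : G.Dart) : ℕ :=
  (faceOf E d).ncard

/-- The number of faces of the embedding lying in a given connected component. -/
noncomputable def componentFaceCount {G : SimpleGraph V} (E : PlaneEmbedding G)
    (c : G.ConnectedComponent) : ℕ :=
  Nat.card (Quotient (Setoid.comap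
    (Subtype.val : {d : G.Dart // G.connectedComponentMk d.fst = c} → G.Dart)
    (Equiv.Perm.SameCycle.setoid E.facePerm)))

/-- The embedding is plane (genus zero): Euler's formula `V - E + F = 2` holds on each
connected component containing an edge (stated as `2V + 2F = #darts + 4`, using that the
number of darts is twice the number of edges). -/
def PlaneEmbedding.IsPlane {G : SimpleGraph V} (E : PlaneEmbedding G) : Prop :=
  ∀ c : G.ConnectedComponent, (∃ d : G.Dart, G.connectedComponentMk d.fst = c) →
    2 * {v : V | G.connectedComponentMk v = c}.ncard + 2 * componentFaceCount E c
      = {d : G.Dart | G.connectedComponentMk d.fst = c}.ncard + 4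

/-- `G` is a planar graph: it admits a plane (genus-zero) combinatorial embedding. -/
def IsPlanar (G : SimpleGraph V) : Prop :=
  ∃ E : PlaneEmbedding G, E.IsPlane

/-- `G` has no cycle of length `n`. -/
def NoCycleLen (G : SimpleGraph V) (n : ℕ) : Prop :=
  ∀ (v : V) (c : G.Walk v v), c.IsCycle → c.length ≠ n

/-- Two cycles (given as closed walks) are normally adjacent: their intersection is
isomorphic to `K₂`, i.e. they share exactly one edge together with its two endpoints. -/
def NormAdjWalks (G : SimpleGraph V) {a b : V} (c₁ : G.Walk a a) (c₂ : G.Walk b b) : Prop :=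
  ∃ x y : V, x ≠ y ∧ s(x, y) ∈ c₁.edges ∧ s(x, y) ∈ c₂.edges ∧
    (∀ z : V, (z ∈ c₁.support ∧ z ∈ c₂.support) ↔ (z = x ∨ z = y))

/-- `G` has no `5`-cycle normally adjacent to a `3`-cycle. -/
def No5CycleNormAdj3 (G : SimpleGraph V) : Prop :=
  ∀ (a b : V) (c₁ : G.Walk a a) (c₂ : G.Walk b b),
    c₁.IsCycle → c₁.length = 5 → c₂.IsCycle → c₂.length = 3 →
      ¬ NormAdjWalks G c₁ c₂

/-- `d` lists the boundary darts of a face in order, and this boundary is the closed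
walk `v 0, v 1, …, v (n-1), v 0`. -/
def FaceTraversal {G : SimpleGraph V} (E : PlaneEmbedding G) {n : ℕ}
    (v : ZMod n → V) (d : ZMod n → G.Dart) : Prop :=
  (∀ i, (d i).toProd = (v i, v (i + 1))) ∧ ∀ i, E.facePerm (d i) = d (i + 1)

/-- The cycle `v 0, v 1, …, v (n-1), v 0` (with distinct vertices) bounds a face of the
embedding (traversed in one of the two possible directions). -/
def CycleBoundsFace {G : SimpleGraph V} (E : PlaneEmbedding G) {n : ℕ}
    (v : ZMod n → V) : Prop :=
  Function.Injective v ∧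
    ((∃ d, FaceTraversal E v d) ∨ (∃ d, FaceTraversal E (fun i => v (-i)) d))

/-- The `i`-th vertex of the boundary walk of the face containing the dart `d0`. -/
def boundaryVert {G : SimpleGraph V} (E : PlaneEmbedding G) (d0 : G.Dart) (i : ℕ) : V :=
  ((E.facePerm ^ i) d0).fst

/-- The faces containing the darts `d1`, `d2` are adjacent: their boundaries share at
least one edge. -/
def FacesAdjacent {G : SimpleGraph V} (E : PlaneEmbedding G) (d1 d2 : G.Dart) : Prop :=
  ∃ e1 e2 : G.Dart, E.facePerm.SameCycle d1 e1 ∧ E.facePerm.SameCycle d2 e2 ∧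
    e1.edge = e2.edge

/-- The set of vertices on the boundary of the face containing the dart `d`. -/
def faceVerts {G : SimpleGraph V} (E : PlaneEmbedding G) (d : G.Dart) : Set V :=
  {x | ∃ e : G.Dart, E.facePerm.SameCycle d e ∧ e.fst = x}

/-- The set of edges on the boundary of the face containing the dart `d`. -/
def faceEdges {G : SimpleGraph V} (E : PlaneEmbedding G) (d : G.Dart) : Set (Sym2 V) :=
  {s | ∃ e : G.Dart, E.facePerm.SameCycle d e ∧ e.edge = s}

section Configs

variable [Fintype V]

/-- Configuration (1): a `10`-cycle bounding a face together with a `3`-cycle bounding a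
face, normally adjacent to it along one edge, all eleven vertices having degree `3`. -/
def Config1 (G : SimpleGraph V) [DecidableRel G.Adj] (E : PlaneEmbedding G) : Prop :=
  ∃ (v : ZMod 10 → V) (w : ZMod 3 → V) (u : V),
    CycleBoundsFace E v ∧ CycleBoundsFace E w ∧
    ({w 0, w 1, w 2} : Set V) = {v 0, v 1, u} ∧ u ∉ Set.range v ∧
    (∀ i, G.degree (v i) = 3) ∧ G.degree u = 3

/-- Configuration (2): two vertex-disjoint `10`-cycles `x₁…x₁₀` and `y₁…y₁₀` (indexed here
from `0`), each bounding a face, with edges `x₃y₃` and `x₁₀y₁₀`; all `xᵢ` have degree `3`,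
`y₃` and `y₁₀` have degree `4`, the other `yᵢ` have degree `3`. -/
def Config2 (G : SimpleGraph V) [DecidableRel G.Adj] (E : PlaneEmbedding G) : Prop :=
  ∃ x y : ZMod 10 → V,
    CycleBoundsFace E x ∧ CycleBoundsFace E y ∧
    Set.range x ∩ Set.range y = ∅ ∧
    G.Adj (x 2) (y 2) ∧ G.Adj (x 9) (y 9) ∧
    (∀ i, G.degree (x i) = 3) ∧
    G.degree (y 2) = 4 ∧ G.degree (y 9) = 4 ∧
    (∀ i, i ≠ 2 → i ≠ 9 → G.degree (y i) = 3)

/-- Configuration (3): an `8`-cycle bounding a face and a `5`-cycle bounding a face that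
are normally adjacent (sharing exactly one edge and its endpoints), all eleven vertices
having degree `3`. -/
def Config3 (G : SimpleGraph V) [DecidableRel G.Adj] (E : PlaneEmbedding G) : Prop :=
  ∃ (a : ZMod 8 → V) (b : ZMod 5 → V),
    CycleBoundsFace E a ∧ CycleBoundsFace E b ∧
    Set.range a ∩ Set.range b = {a 0, a 1} ∧
    (∃ j : ZMod 5, (b j = a 0 ∧ b (j + 1) = a 1) ∨ (b j = a 1 ∧ b (j + 1) = a 0)) ∧
    (∀ i, G.degree (a i) = 3) ∧ (∀ j, G.degree (b j) = 3)

end Configs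

open Classical in
/-- The function resulting from the operation `Delete_[u](G, f)`: every neighbour of `u`
loses one unit. -/
noncomputable def deleteFun (G : SimpleGraph V) (u : V) (f : V → ℤ) : V → ℤ :=
  fun v => if G.Adj u v then f v - 1 else f v

open Classical in
/-- The function resulting from the operation `DeleteSave_[u; w](G, f)`: every neighbour
of `u` except `w` loses one unit. -/
noncomputable def deleteSaveFun (G : SimpleGraph V) (u w : V) (f : V → ℤ) : V → ℤ :=
  fun v => if G.Adj u v ∧ v ≠ w then f v - 1 else f v

/-- All vertices of the subgraph of `G` induced on `S` can be removed by a sequence of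
legal applications of the `Delete` and `DeleteSave` operations, starting from the value
function `f`. -/
inductive WeaklyReducible (G : SimpleGraph V) : Set V → (V → ℤ) → Prop
  | empty (f : V → ℤ) : WeaklyReducible G ∅ f
  | delete (S : Set V) (f : V → ℤ) (u : V) (hu : u ∈ S)
      (hnn : ∀ v ∈ S \ {u}, 0 ≤ deleteFun G u f v)
      (h : WeaklyReducible G (S \ {u}) (deleteFun G u f)) : WeaklyReducible G S f
  | deleteSave (S : Set V) (f : V → ℤ) (u w : V) (hu : u ∈ S) (hw : w ∈ S \ {u})
      (hadj : G.Adj u w) (hlt : f w < f u)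
      (hnn : ∀ v ∈ S \ {u}, 0 ≤ deleteSaveFun G u w f v)
      (h : WeaklyReducible G (S \ {u}) (deleteSaveFun G u w f)) : WeaklyReducible G S f

/-- `G` is weakly `d`-degenerate: all its vertices can be removed by a sequence of legal
applications of the `Delete` and `DeleteSave` operations, starting from the constant
function of value `d`. -/
def WeaklyDegenerate (G : SimpleGraph V) (d : ℤ) : Prop :=
  WeaklyReducible G Set.univ (fun _ => d)

/-- The canonical cover of `G` with `s = 2`: two disjoint copies of `G`, on vertex set
`V × Fin 2`, with `(u, i)` adjacent to `(v, j)` iff `uv ∈ E(G)` and `i = j`. -/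
def canonicalCover2 (G : SimpleGraph V) : SimpleGraph (V × Fin 2) where
  Adj a b := G.Adj a.1 b.1 ∧ a.2 = b.2
  symm := ⟨fun _ _ h => ⟨h.1.symm, h.2.symm⟩⟩
  loopless := ⟨fun a h => G.irrefl h.1⟩

/-- `T` is a strictly `f`-degenerate transversal-candidate set: every nonempty subgraph
`K` of the induced subgraph `H[T]` has a vertex `x` with `deg_K x < f x`. -/
def StrictlyFDegenerateOn {W : Type*} (H : SimpleGraph W) (f : W → ℕ) (T : Set W) : Prop :=
  ∀ K : H.Subgraph, K.verts ⊆ T → K.verts.Nonempty →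
    ∃ x ∈ K.verts, Nat.card (K.neighborSet x) < f x

end Paper

open SimpleGraph

/-!
Let the 3-face `abc` and the 9-face share the edge `ab`, and let `w 0, …, w 8` be the boundary
walk of the 9-face, starting `b, a`. At a vertex of degree at least 3 the rotation has no orbit of
size at most 2; hence a face boundary never backtracks, and the 9-face never runs along two edges
of the triangle in the direction opposite to the 3-face. In a graph without 4-cycles a closed 9-walk
without backtracking repeats vertices only at distance 3, and since there is no 9-cycle it does
repeat, so it consists of a triangle loop and a closed 6-walk. The two restrictions on the face
force the 6-walk to be a hexagon through `ab`, and together with `c` it yields a 4-cycle, a 7-cycle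
or a 5-cycle normally adjacent to `abc`.
-/

theorem Equiv.Perm.exists_zmod_orbit {α : Type*} [Finite α] (σ : Equiv.Perm α) (x : α) :
    ∃ δ : ZMod {y | σ.SameCycle x y}.ncard → α, δ 0 = x ∧ ∀ i, σ (δ i) = δ (i + 1) := by
  classical
  have horbit : {y | σ.SameCycle x y} = MulAction.orbit (Subgroup.zpowers σ) x := by
    ext y
    simp only [Set.mem_ofPred_eq, MulAction.mem_orbit_iff, Subtype.exists,
      Subgroup.mem_zpowers_iff]
    exact ⟨fun ⟨k, hk⟩ => ⟨_, ⟨k, rfl⟩, hk⟩, fun ⟨_, ⟨k, rfl⟩, hk⟩ => ⟨k, hk⟩⟩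
  have := Fintype.ofFinite (MulAction.orbit (Subgroup.zpowers σ) x)
  have hcard : {y | σ.SameCycle x y}.ncard = Function.minimalPeriod (σ • ·) x := by
    rw [horbit, ← Nat.card_coe_set_eq, Nat.card_eq_fintype_card,
      MulAction.minimalPeriod_eq_card]
  rw [hcard]
  have hper : ∀ k l : ℤ, (k : ZMod (Function.minimalPeriod (σ • ·) x)) = l →
      (σ ^ k) x = (σ ^ l) x := by
    intro k l hkl
    rw [ZMod.intCast_eq_intCast_iff'] at hkl
    rw [← Equiv.Perm.smul_def, ← MulAction.zpow_smul_mod_minimalPeriod, hkl,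
      MulAction.zpow_smul_mod_minimalPeriod, Equiv.Perm.smul_def]
  refine ⟨fun i => (σ ^ (i.cast : ℤ)) x, by simp, fun i => ?_⟩
  rw [← Equiv.Perm.mul_apply, ← zpow_one_add]
  exact hper _ _ (by push_cast; simp [add_comm])

namespace Paper

variable {V : Type*} {G : SimpleGraph V}

section Cycles

theorem exists_isCycle_of_isChain {u v : V} {l : List V} (hl : l ≠ [])
    (hnd : (u :: v :: l).Nodup) (hchain : (u :: v :: (l ++ [u])).IsChain G.Adj) :
    ∃ c : G.Walk u u, c.IsCycle ∧ c.length = l.length + 2 ∧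
      c.support = u :: v :: (l ++ [u]) ∧ s(u, v) ∈ c.edges := by
  obtain ⟨q, hq⟩ : ∃ q : G.Walk v u, q.support = v :: (l ++ [u]) := by
    have hhead : (v :: (l ++ [u])).head (List.cons_ne_nil _ _) = v := rfl
    have hlast : (v :: (l ++ [u])).getLast (List.cons_ne_nil _ _) = u := by simp
    exact ⟨(Walk.ofSupport _ _ hchain.of_cons).copy hhead hlast, by
      rw [Walk.support_copy, Walk.support_ofSupport]⟩
  have hlen : q.length = l.length + 1 := by
    simpa [hq] using q.length_support.symm
  have hpath : q.IsPath := by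
    have hrot : (u :: v :: l).rotate 1 = v :: (l ++ [u]) := by simp [List.rotate_cons_succ]
    rw [Walk.isPath_def, hq, ← hrot]
    exact List.nodup_rotate.mpr hnd
  refine ⟨.cons hchain.rel q, (Walk.cons_isCycle_iff _ _).mpr ⟨hpath, fun he => ?_⟩,
    by simp [hlen], by simp [hq], by simp⟩
  have hsnd := hpath.eq_snd_of_mem_edges (Sym2.eq_swap ▸ he)
  obtain ⟨x, l', rfl⟩ := List.exists_cons_of_ne_nil hl
  rw [Walk.snd_eq_support_getElem_one (by simp [← Walk.length_eq_zero_iff, hlen])] at hsnd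
  simp only [hq, List.cons_append, List.getElem_cons_succ, List.getElem_cons_zero] at hsnd
  simp_all

theorem exists_isCycle_of_injective {n : ℕ} (hn : 3 ≤ n) {w : ZMod n → V}
    (hw : Function.Injective w) (hadj : ∀ i, G.Adj (w i) (w (i + 1))) :
    ∃ c : G.Walk (w 0) (w 0), c.IsCycle ∧ c.length = n := by
  obtain ⟨m, rfl⟩ : ∃ m, n = m + 3 := ⟨n - 3, by omega⟩
  set f : ℕ → V := fun i => w i
  have hsplit : (List.range (m + 3)).map f =
      w 0 :: w 1 :: (List.range (m + 1)).map (fun i => f (i + 2)) := by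
    norm_num [List.range_succ_eq_map, List.map_map, f, Function.comp_def, add_assoc]
  have hnd : ((List.range (m + 3)).map f).Nodup := by
    refine List.Nodup.map_on (fun i hi j hj hij => ?_) List.nodup_range
    have := (ZMod.natCast_eq_natCast_iff' i j (m + 3)).mp (hw hij)
    rwa [Nat.mod_eq_of_lt (List.mem_range.mp hi), Nat.mod_eq_of_lt (List.mem_range.mp hj)] at this
  have hchain : ((List.range (m + 4)).map f).IsChain G.Adj :=
    List.isChain_map _ |>.mpr <| (List.isChain_range _ _).mpr fun i _ => by
      simpa [f] using hadj i
  rw [List.range_succ, List.map_append, hsplit] at hchain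
  rw [hsplit] at hnd
  obtain ⟨c, hc, hlen, -⟩ := exists_isCycle_of_isChain (by simp) hnd (by simpa [f] using hchain)
  exact ⟨c, hc, by simpa using hlen⟩

theorem NoCycleLen.eq_or_eq_of_square (h4 : NoCycleLen G 4) {p q r s : V} (hpq : G.Adj p q)
    (hqr : G.Adj q r) (hrs : G.Adj r s) (hsp : G.Adj s p) : p = r ∨ q = s := by
  by_contra! hne
  obtain ⟨c, hc, hlen, -⟩ := exists_isCycle_of_isChain (G := G) (u := p) (v := q) (l := [r, s])
    (by simp) (by simp [hpq.ne, hqr.ne, hrs.ne, hsp.ne', hne.1, hne.2])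
    (by simp [hpq, hqr, hrs, hsp])
  exact h4 _ c hc hlen

theorem NoCycleLen.eq_of_adj_of_adj (h4 : NoCycleLen G 4) {a b c x : V} (hab : G.Adj a b)
    (hac : G.Adj a c) (hbc : G.Adj b c) (hxa : G.Adj x a) (hxb : G.Adj x b) : x = c :=
  ((h4.eq_or_eq_of_square hac hbc.symm hxb.symm hxa).resolve_left hab.ne).symm

theorem No5CycleNormAdj3.mem_of_pentagon (h53 : No5CycleNormAdj3 G) {x y z p q r : V}
    (hxy : G.Adj x y) (hyz : G.Adj y z) (hzx : G.Adj z x) (hzp : G.Adj z p) (hpq : G.Adj p q)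
    (hqr : G.Adj q r) (hry : G.Adj r y) (hnd : [y, z, p, q, r].Nodup) :
    x = p ∨ x = q ∨ x = r := by
  by_contra! hx
  obtain ⟨c₁, hc₁, hl₁, hs₁, he₁⟩ := exists_isCycle_of_isChain (G := G) (u := y) (v := z)
    (l := [p, q, r]) (by simp) hnd (by simp [hyz, hzp, hpq, hqr, hry])
  obtain ⟨c₂, hc₂, hl₂, hs₂, he₂⟩ := exists_isCycle_of_isChain (G := G) (u := y) (v := z)
    (l := [x]) (by simp) (by simp [hxy.ne', hyz.ne, hzx.ne]) (by simp [hyz, hzx, hxy])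
  refine h53 y y c₁ c₂ hc₁ hl₁ hc₂ hl₂ ⟨y, z, hyz.ne, he₁, he₂, fun v => ?_⟩
  simp only [hs₁, hs₂, List.cons_append, List.nil_append, List.mem_cons, List.not_mem_nil]
  grind [SimpleGraph.Adj.ne]

end Cycles

section ClosedWalks

theorem NoCycleLen.ne_add_four (h4 : NoCycleLen G 4) {n : ℕ} {w : ZMod n → V}
    (hadj : ∀ i, G.Adj (w i) (w (i + 1))) (hnb : ∀ i, w i ≠ w (i + 2)) (i : ZMod n) :
    w i ≠ w (i + 4) := by
  intro he
  have e2 : G.Adj (w (i + 1)) (w (i + 2)) := by convert hadj (i + 1) using 2; ring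
  have e3 : G.Adj (w (i + 2)) (w (i + 3)) := by convert hadj (i + 2) using 2; ring
  have e4 : G.Adj (w (i + 3)) (w i) := by rw [he]; convert hadj (i + 3) using 2; ring
  rcases h4.eq_or_eq_of_square (hadj i) e2 e3 e4 with h | h
  · exact hnb i h
  · exact hnb (i + 1) (by convert h using 2; ring)

theorem eq_or_eq_add_three (h4 : NoCycleLen G 4) {w : ZMod 9 → V}
    (hadj : ∀ i, G.Adj (w i) (w (i + 1))) (hnb : ∀ i, w i ≠ w (i + 2)) {i j : ZMod 9}
    (h : w i = w j) : j = i ∨ j = i + 3 ∨ i = j + 3 := by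
  have hne : ∀ i e, e = 1 ∨ e = 2 ∨ e = 4 → w i ≠ w (i + e) := by
    rintro i e (rfl | rfl | rfl)
    exacts [(hadj i).ne, hnb i, h4.ne_add_four hadj hnb i]
  have hne' : ∀ i d e, e = 1 ∨ e = 2 ∨ e = 4 → d + e = 0 → w i ≠ w (i + d) := by
    intro i d e he hde h'
    exact hne (i + d) e he (by rw [add_assoc, hde, add_zero, ← h'])
  obtain ⟨d, rfl⟩ : ∃ d, j = i + d := ⟨j - i, by ring⟩
  have hd : ∀ d : ZMod 9, d = 0 ∨ d = 3 ∨ d = 6 ∨ d = 1 ∨ d = 2 ∨ d = 4 ∨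
      d + 4 = 0 ∨ d + 2 = 0 ∨ d + 1 = 0 := by decide
  rcases hd d with rfl | rfl | rfl | hd | hd | hd | hd | hd | hd
  · exact Or.inl (add_zero i)
  · exact Or.inr (Or.inl rfl)
  · exact Or.inr (Or.inr (by rw [add_assoc, show (6 + 3 : ZMod 9) = 0 from rfl, add_zero]))
  all_goals first
    | exact absurd h (hne i d (by simp [hd]))
    | exact absurd h (hne' i d _ (by simp) hd)

theorem exists_hexagon (h4 : NoCycleLen G 4) {w : ZMod 9 → V}
    (hadj : ∀ i, G.Adj (w i) (w (i + 1))) (hnb : ∀ i, w i ≠ w (i + 2)) {k : ZMod 9}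
    (hk : w k = w (k + 3))
    (hnoloop : ∀ d : ZMod 9, d = 3 ∨ d = 4 ∨ d = 5 → w (k + d) ≠ w (k + d + 3))
    (hk0 : k ≠ 0) (hk7 : k ≠ 7) (hk8 : k ≠ 8) :
    ∃ h : ZMod 6 → V, Function.Injective h ∧ (∀ m, G.Adj (h m) (h (m + 1))) ∧
      ∃ j, h j = w 0 ∧ h (j + 1) = w 1 := by
  set h : ZMod 6 → V := fun m => w (k + 3 + (m.val : ZMod 9))
  -- the hexagon closes up through the loop: `w (k + 9) = w k = w (k + 3)`
  have hsucc : ∀ m, h (m + 1) = w (k + 3 + (m.val : ZMod 9) + 1) := by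
    intro m
    by_cases hm : m = 5
    · subst hm
      simp only [h]
      rw [show (((5 + 1 : ZMod 6).val : ℕ) : ZMod 9) = 0 from rfl,
        show (((5 : ZMod 6).val : ℕ) : ZMod 9) = 5 from rfl, add_zero, ← hk]
      congr 1
      rw [add_assoc, add_assoc, show (3 + (5 + 1) : ZMod 9) = 0 from rfl, add_zero]
    · have hval : ∀ m : ZMod 6, m ≠ 5 →
          (((m + 1).val : ℕ) : ZMod 9) = (m.val : ZMod 9) + 1 := by decide
      simp only [h, hval m hm, add_assoc]
  refine ⟨h, fun m m' hmm' => ?_, fun m => by rw [hsucc]; exact hadj _, ?_⟩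
  · have hval : ∀ m m' : ZMod 6, ((m.val : ℕ) : ZMod 9) = m'.val → m = m' := by decide
    have hloop : ∀ m m' : ZMod 6, ((m'.val : ℕ) : ZMod 9) = m.val + 3 →
        3 + (m.val : ZMod 9) = 3 ∨ 3 + (m.val : ZMod 9) = 4 ∨ 3 + (m.val : ZMod 9) = 5 := by
      decide
    rcases eq_or_eq_add_three h4 hadj hnb hmm' with e | e | e
    · exact (hval _ _ (add_left_cancel e)).symm
    · rw [add_assoc (k + 3)] at e
      refine absurd ?_ (hnoloop _ (hloop m m' (add_left_cancel e)))
      have e' : h m = w (k + 3 + ((m.val : ZMod 9) + 3)) := hmm'.trans (congrArg w e)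
      simpa only [h, add_assoc] using e'
    · rw [add_assoc (k + 3)] at e
      refine absurd ?_ (hnoloop _ (hloop m' m (add_left_cancel e)))
      have e' : h m' = w (k + 3 + ((m'.val : ZMod 9) + 3)) := hmm'.symm.trans (congrArg w e)
      simpa only [h, add_assoc] using e'
  · have hpos : ∀ k : ZMod 9, k ≠ 0 → k ≠ 7 → k ≠ 8 →
        ∃ j : ZMod 6, k + 3 + (j.val : ZMod 9) = 0 := by decide
    obtain ⟨j, hj⟩ := hpos k hk0 hk7 hk8
    exact ⟨j, by simp only [h, hj], by rw [hsucc, hj, zero_add]⟩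

end ClosedWalks

section Triangle

variable {t : ZMod 3 → V} {w : ZMod 9 → V}

theorem not_injective_hexagon (h4 : NoCycleLen G 4) (h7 : NoCycleLen G 7)
    (h53 : No5CycleNormAdj3 G) (ht : ∀ j, G.Adj (t j) (t (j + 1))) {h : ZMod 6 → V}
    (hadj : ∀ m, G.Adj (h m) (h (m + 1))) {j : ZMod 6} (hb : h j = t 1) (ha : h (j + 1) = t 0) :
    ¬ Function.Injective h := by
  suffices key : ∀ h : ZMod 6 → V, Function.Injective h → (∀ m, G.Adj (h m) (h (m + 1))) →
      h 0 = t 1 → h 1 = t 0 → False from fun hinj =>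
    key (fun m => h (j + m)) (hinj.comp (add_right_injective j))
      (fun m => by simpa only [add_assoc] using hadj (j + m)) (by simpa using hb) ha
  intro h hinj hadj hb ha
  have hab : G.Adj (h 1) (h 0) := by rw [hb, ha]; exact ht 0
  have hbc : G.Adj (h 0) (t 2) := by rw [hb]; exact ht 1
  have hca : G.Adj (t 2) (h 1) := by rw [ha]; exact ht 2
  have e12 : G.Adj (h 1) (h 2) := hadj 1
  have e23 : G.Adj (h 2) (h 3) := hadj 2
  have e34 : G.Adj (h 3) (h 4) := hadj 3
  have e45 : G.Adj (h 4) (h 5) := hadj 4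
  have e50 : G.Adj (h 5) (h 0) := hadj 5
  by_cases c2 : t 2 = h 2
  · have := h53.mem_of_pentagon hab hbc hca (c2 ▸ e23) e34 e45 e50
      (by rw [c2]; simp [hinj.eq_iff]; decide)
    revert this; simp [hinj.eq_iff]; decide
  by_cases c5 : t 2 = h 5
  · have := h53.mem_of_pentagon hbc hca hab e12 e23 e34 (c5 ▸ e45)
      (by rw [c5]; simp [hinj.eq_iff]; decide)
    revert this; simp [hinj.eq_iff]; decide
  by_cases c3 : t 2 = h 3
  · have := h4.eq_or_eq_of_square (c3 ▸ e34) e45 e50 hbc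
    revert this; simp [c3, hinj.eq_iff]; decide
  by_cases c4 : t 2 = h 4
  · have := h4.eq_or_eq_of_square e12 e23 (c4 ▸ e34) hca
    revert this; simp [c4, hinj.eq_iff]; decide
  obtain ⟨c, hc, hlen, -⟩ := exists_isCycle_of_isChain (G := G) (u := h 1) (v := t 2)
    (l := [h 0, h 5, h 4, h 3, h 2]) (by simp)
    (by simp [hinj.eq_iff, hbc.ne.symm, hca.ne', c2, c3, c4, c5]; decide)
    (by simp [hca.symm, hbc.symm, e50.symm, e45.symm, e34.symm, e23.symm, e12.symm])
  exact h7 _ c hc hlen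

/-- A repeat `w k = w (k + 3)` is a triangle loop of the walk. No such loop runs along the edge
`w 0 w 1`, and loops at `k` and `k + 4` never occur together: the walk would then be three
triangle loops around the triangle `w (k + 3), w (k + 4), w (k + 8)`, one of which contains
`w 0 w 1`. -/
theorem loop_avoids_edge_of_no_turn (h4 : NoCycleLen G 4) (ht : ∀ j, G.Adj (t j) (t (j + 1)))
    (hadj : ∀ i, G.Adj (w i) (w (i + 1))) (h0 : w 0 = t 1) (h1 : w 1 = t 0)
    (hturn : ∀ i j, w i = t (j + 1) → w (i + 1) = t j → w (i + 2) ≠ t (j - 1))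
    {k : ZMod 9} (hk : w k = w (k + 3)) :
    (k ≠ 0 ∧ k ≠ 7 ∧ k ≠ 8) ∧ w (k + 4) ≠ w (k + 7) := by
  have hcommon : ∀ x, G.Adj x (t 0) → G.Adj x (t 1) → x = t 2 :=
    fun x hxa hxb => h4.eq_of_adj_of_adj (ht 0) (ht 2).symm (ht 1) hxa hxb
  have hw2 : ¬ G.Adj (w 2) (t 1) := fun hw2 =>
    hturn 0 0 h0 h1 (hcommon _ (by rw [← h1]; exact (hadj 1).symm) hw2)
  have hw8 : ¬ G.Adj (w 8) (t 0) := fun hw8 =>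
    hturn 8 1 (hcommon _ hw8 (by rw [← h0]; exact hadj 8)) h0 h1
  have hw46 : ¬ (w 4 = t 0 ∧ w 6 = t 1) := fun ⟨e4, e6⟩ =>
    hturn 4 2 e4 (hcommon _ (by rw [← e4]; exact (hadj 4).symm) (by rw [← e6]; exact hadj 5)) e6
  have hbad : ∀ k, w k = w (k + 3) → k ≠ 0 ∧ k ≠ 7 ∧ k ≠ 8 := by
    refine fun k hk => ⟨?_, ?_, ?_⟩ <;> rintro rfl
    · exact hw2 (by rw [← h0, hk]; exact hadj 2)
    · have e7 : w 7 = w 1 := hk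
      exact hw8 (by rw [← h1, ← e7]; exact (hadj 7).symm)
    · have e8 : w 8 = w 2 := hk
      exact hw8 (by rw [← h1, e8]; exact (hadj 1).symm)
  refine ⟨hbad k hk, fun he => ?_⟩
  have hcases : ∀ k : ZMod 9, (k ≠ 0 ∧ k ≠ 7 ∧ k ≠ 8) → (k + 4 ≠ 0 ∧ k + 4 ≠ 7 ∧ k + 4 ≠ 8) →
      k = 1 ∨ k = 2 ∨ k = 6 := by decide
  rcases hcases k (hbad k hk) (hbad (k + 4) (by rw [he]; congr 1; ring)) with rfl | rfl | rfl
  · have e1 : w 1 = w 4 := hk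
    have e5 : w 5 = w 8 := he
    exact hw8 (by rw [← h1, e1, ← e5]; exact (hadj 4).symm)
  · have e2 : w 2 = w 5 := hk
    have e6 : w 6 = w 0 := he
    exact hw2 (by rw [← h0, e2, ← e6]; exact hadj 5)
  · have e6 : w 6 = w 0 := hk
    have e1 : w 1 = w 4 := he
    exact hw46 ⟨e1.symm.trans h1, e6.trans h0⟩

theorem exists_turn_of_triangle (h4 : NoCycleLen G 4) (h7 : NoCycleLen G 7)
    (h9 : NoCycleLen G 9) (h53 : No5CycleNormAdj3 G) (ht : ∀ j, G.Adj (t j) (t (j + 1)))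
    (hadj : ∀ i, G.Adj (w i) (w (i + 1))) (hnb : ∀ i, w i ≠ w (i + 2))
    (h0 : w 0 = t 1) (h1 : w 1 = t 0) :
    ∃ i j, w i = t (j + 1) ∧ w (i + 1) = t j ∧ w (i + 2) = t (j - 1) := by
  by_contra! hturn
  have hloop := fun k => loop_avoids_edge_of_no_turn (k := k) h4 ht hadj h0 h1 hturn
  obtain ⟨k, hk⟩ : ∃ k, w k = w (k + 3) := by
    by_contra! hno
    refine absurd (exists_isCycle_of_injective (by norm_num) (fun i j hij => ?_) hadj) ?_
    · rcases eq_or_eq_add_three h4 hadj hnb hij with e | e | e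
      exacts [e.symm, absurd (e ▸ hij) (hno i), absurd (e ▸ hij.symm) (hno j)]
    · rintro ⟨c, hc, hlen⟩
      exact h9 _ c hc hlen
  obtain ⟨⟨hk0, hk7, hk8⟩, hk4⟩ := hloop k hk
  have hnoloop : ∀ d : ZMod 9, d = 3 ∨ d = 4 ∨ d = 5 → w (k + d) ≠ w (k + d + 3) := by
    rintro d (rfl | rfl | rfl) he
    · have he' : w (k + 3 + 3) = w (k + 3 + 3 + 3) := by
        rw [← he, ← hk]; congr 1
        rw [add_assoc, add_assoc, show (3 + (3 + 3) : ZMod 9) = 0 from rfl, add_zero]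
      have hcases : ∀ k : ZMod 9, (k ≠ 0 ∧ k ≠ 7 ∧ k ≠ 8) →
          (k + 3 ≠ 0 ∧ k + 3 ≠ 7 ∧ k + 3 ≠ 8) →
          ¬ (k + 3 + 3 ≠ 0 ∧ k + 3 + 3 ≠ 7 ∧ k + 3 + 3 ≠ 8) := by decide
      exact hcases k ⟨hk0, hk7, hk8⟩ (hloop _ he).1 (hloop _ he').1
    · exact hk4 (by convert he using 2; ring)
    · have e9 : k + 5 + 4 = k := by rw [add_assoc, show (5 + 4 : ZMod 9) = 0 from rfl, add_zero]
      have e12 : k + 5 + 7 = k + 3 := by rw [add_assoc, show (5 + 7 : ZMod 9) = 3 from rfl]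
      exact (hloop _ he).2 (by rw [e9, e12]; exact hk)
  obtain ⟨h, hinj, hadj', j, hj, hj1⟩ := exists_hexagon h4 hadj hnb hk hnoloop hk0 hk7 hk8
  exact not_injective_hexagon h4 h7 h53 ht hadj' (hj.trans h0) (hj1.trans h1) hinj

end Triangle

namespace PlaneEmbedding

variable (E : PlaneEmbedding G)

@[simp]
theorem facePerm_apply (d : G.Dart) : E.facePerm d = E.rot d.symm := rfl

@[simp]
theorem fst_facePerm (d : G.Dart) : (E.facePerm d).fst = d.snd := by
  simp [E.fst_rot]

theorem faceSize_eq_of_sameCycle {d e : G.Dart} (h : E.facePerm.SameCycle d e) :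
    faceSize E d = faceSize E e :=
  congrArg Set.ncard (Set.ext fun _ => ⟨h.symm.trans, h.trans⟩)

theorem exists_faceWalk [Finite G.Dart] (d : G.Dart) {n : ℕ} (hn : faceSize E d = n) :
    ∃ δ : ZMod n → G.Dart, δ 0 = d ∧ ∀ i, E.facePerm (δ i) = δ (i + 1) := by
  subst hn
  exact E.facePerm.exists_zmod_orbit d

variable [Fintype V] [DecidableRel G.Adj]

theorem rot_rot_ne {d : G.Dart} (hd : 3 ≤ G.degree d.fst) : E.rot (E.rot d) ≠ d := by
  classical
  intro h
  have horbit : ∀ k : ℕ, (E.rot ^ k) d = d ∨ (E.rot ^ k) d = E.rot d := by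
    intro k
    induction k with
    | zero => exact Or.inl rfl
    | succ k ih =>
      rw [pow_succ', Equiv.Perm.mul_apply]
      rcases ih with h' | h' <;> rw [h']
      exacts [Or.inr rfl, Or.inl h]
  have hsub : G.neighborFinset d.fst ⊆ {d.snd, (E.rot d).snd} := by
    intro z hz
    obtain ⟨k, hk⟩ := (E.rot_cyclic d ⟨(d.fst, z), (G.mem_neighborFinset _ _).mp hz⟩
      rfl).exists_nat_pow_eq
    rcases horbit k with h' | h' <;> rw [h'] at hk
    · exact Finset.mem_insert.mpr (Or.inl (congrArg (fun e : G.Dart => e.snd) hk).symm)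
    · exact Finset.mem_insert.mpr (Or.inr (Finset.mem_singleton.mpr
        (congrArg (fun e : G.Dart => e.snd) hk).symm))
  have := (Finset.card_le_card hsub).trans Finset.card_le_two
  rw [card_neighborFinset_eq_degree] at this
  omega

theorem facePerm_symm_ne_symm {d e : G.Dart} (hd : 3 ≤ G.degree d.snd)
    (h : E.facePerm d = e) : E.facePerm e.symm ≠ d.symm := by
  subst h
  simpa using E.rot_rot_ne (d := d.symm) hd

theorem facePerm_ne_symm {d : G.Dart} (hd : 3 ≤ G.degree d.snd) : E.facePerm d ≠ d.symm :=
  fun h => E.facePerm_symm_ne_symm hd h (by rw [Dart.symm_symm]; exact h)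

end PlaneEmbedding

section FaceWalks

variable (E : PlaneEmbedding G) {n : ℕ} {δ : ZMod n → G.Dart}

theorem snd_eq_fst_add_one (hδ : ∀ i, E.facePerm (δ i) = δ (i + 1)) (i : ZMod n) :
    (δ i).snd = (δ (i + 1)).fst := by
  rw [← hδ, E.fst_facePerm]

theorem adj_fst_add_one (hδ : ∀ i, E.facePerm (δ i) = δ (i + 1)) (i : ZMod n) :
    G.Adj (δ i).fst (δ (i + 1)).fst :=
  snd_eq_fst_add_one E hδ i ▸ (δ i).adj

variable [Fintype V] [DecidableRel G.Adj]

theorem fst_ne_fst_add_two (hmin : ∀ v, 3 ≤ G.degree v)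
    (hδ : ∀ i, E.facePerm (δ i) = δ (i + 1)) (i : ZMod n) :
    (δ i).fst ≠ (δ (i + 2)).fst := by
  intro he
  have hsnd : (δ (i + 1)).snd = (δ (i + 2)).fst := by
    rw [snd_eq_fst_add_one E hδ, add_assoc, one_add_one_eq_two]
  have hback : δ (i + 1) = (δ i).symm :=
    Dart.ext _ _ (Prod.ext (snd_eq_fst_add_one E hδ i).symm (hsnd.trans he.symm))
  exact E.facePerm_ne_symm (hmin _) ((hδ i).trans hback)

theorem not_turn (hmin : ∀ v, 3 ≤ G.degree v) {m : ℕ} {τ : ZMod m → G.Dart}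
    (hδ : ∀ i, E.facePerm (δ i) = δ (i + 1)) (hτ : ∀ j, E.facePerm (τ j) = τ (j + 1))
    (i : ZMod n) (j : ZMod m) :
    ¬ ((δ i).fst = (τ (j + 1)).fst ∧ (δ (i + 1)).fst = (τ j).fst ∧
      (δ (i + 2)).fst = (τ (j - 1)).fst) := by
  rintro ⟨e0, e1, e2⟩
  have hτsnd : (τ (j - 1)).snd = (τ j).fst := by rw [snd_eq_fst_add_one E hτ, sub_add_cancel]
  have hδsnd : (δ (i + 1)).snd = (δ (i + 2)).fst := by
    rw [snd_eq_fst_add_one E hδ, add_assoc, one_add_one_eq_two]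
  have hi : δ i = (τ j).symm :=
    Dart.ext _ _ (Prod.ext (e0.trans (snd_eq_fst_add_one E hτ j).symm)
      ((snd_eq_fst_add_one E hδ i).trans e1))
  have hi1 : δ (i + 1) = (τ (j - 1)).symm :=
    Dart.ext _ _ (Prod.ext (e1.trans hτsnd.symm) (hδsnd.trans e2))
  have hτ' : E.facePerm (τ (j - 1)) = τ j := by rw [hτ, sub_add_cancel]
  exact E.facePerm_symm_ne_symm (hmin _) hτ' (by rw [← hi, hδ, hi1])

end FaceWalks

end Paper

theorem statement19_general {V : Type*} [Fintype V] (G : SimpleGraph V) [DecidableRel G.Adj]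
    (E : Paper.PlaneEmbedding G)
    (hmin : ∀ v : V, 3 ≤ G.degree v)
    (h4 : Paper.NoCycleLen G 4) (h7 : Paper.NoCycleLen G 7)
    (h9 : Paper.NoCycleLen G 9) (h53 : Paper.No5CycleNormAdj3 G) :
    ∀ d1 d2 : G.Dart, Paper.faceSize E d1 = 3 → Paper.faceSize E d2 = 9 →
      ¬ Paper.FacesAdjacent E d1 d2 := by
  rintro d1 d2 hs1 hs2 ⟨e1, e2, he1, he2, hedge⟩
  rw [E.faceSize_eq_of_sameCycle he1] at hs1
  rw [E.faceSize_eq_of_sameCycle he2] at hs2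
  obtain ⟨τ, rfl, hτ⟩ := E.exists_faceWalk e1 hs1
  obtain ⟨δ, rfl, hδ⟩ := E.exists_faceWalk e2 hs2
  rcases (dart_edge_eq_iff _ _).mp hedge with h | h
  · rw [h] at hs1
    omega
  have h0 : (δ 0).fst = (τ 1).fst := by
    rw [← zero_add (1 : ZMod 3), ← Paper.snd_eq_fst_add_one E hτ, h]; rfl
  have h1 : (δ 1).fst = (τ 0).fst := by
    rw [← zero_add (1 : ZMod 9), ← Paper.snd_eq_fst_add_one E hδ, h]; rfl
  obtain ⟨i, j, hturn⟩ := Paper.exists_turn_of_triangle h4 h7 h9 h53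
    (Paper.adj_fst_add_one E hτ) (Paper.adj_fst_add_one E hδ)
    (Paper.fst_ne_fst_add_two E hmin hδ) h0 h1
  exact Paper.not_turn E hmin hδ hτ i j hturn

/-- No 3-face is adjacent to a 9-face. -/
theorem statement19 {V : Type*} [Fintype V] (G : SimpleGraph V) [DecidableRel G.Adj]
    (hconn : G.Connected)
    (E : Paper.PlaneEmbedding G) (hE : E.IsPlane)
    (hmin : ∀ v : V, 3 ≤ G.degree v)
    (h4 : Paper.NoCycleLen G 4) (h7 : Paper.NoCycleLen G 7)
    (h9 : Paper.NoCycleLen G 9) (h53 : Paper.No5CycleNormAdj3 G) :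
    ∀ d1 d2 : G.Dart, Paper.faceSize E d1 = 3 → Paper.faceSize E d2 = 9 →
      ¬ Paper.FacesAdjacent E d1 d2 :=
  statement19_general G E hmin h4 h7 h9 h53
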